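/- arXiv:2105.11142 — 2 statements merged into one kernel-verified Lean document; each statement's English description precedes it below -/
import Mathlib

section
/- Let a perfect fluid spacetime (M⁴,g) with torse-forming velocity vector field ξ admit a conformal Ricci-Yamabe soliton (g, V, Λ, α, β) with α ≠ 0. Then the potential vector field V is a conformal Killing vector field if and only if the spacetime is Einstein, i.e. S(X,Y) = θ g(X,Y) for some scalar θ. -/
/-- Signature factors of a pseudo-orthonormal frame on a Lorentzian 4-manifold
with signature (-,+,+,+). -/
def lorentzSign (i : Fin 4) : ℝ := if i = 0 then -1 else 1

/-- An abstract perfect fluid spacetime: a (connected) 4-dimensional Lorentzian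
manifold with signature (-,+,+,+), described through its space of (smooth)
vector fields `VF`, a module over the ring `M → ℝ` of smooth functions on the
underlying manifold `M`.  The data consists of the Lorentzian metric `g`, the
directional derivative `dd` of functions along vector fields, the Levi-Civita
connection `nabla`, the Lie bracket `bracket`, the Ricci tensor `S`, the scalar
curvature `r`, the energy-momentum tensor `T`, a pseudo-orthonormal frame
`frame`, the unit timelike velocity vector field `xi`, the cosmological
constant `lam`, the gravitational constant `kappa`, the energy density `sigma`
and the isotropic pressure `rho`; the Ricci tensor and scalar curvature are the
usual traces of the curvature of the Levi-Civita connection, and Einstein's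
field equation `S + (λ - r/2) g = κ T` holds with the perfect fluid
energy-momentum tensor `T = ρ g + (σ + ρ) η ⊗ η`, where `η(X) = g(X, ξ)` and
`g(ξ, ξ) = -1`. -/
structure PerfectFluidSpacetime (M VF : Type*) [AddCommGroup VF]
    [Module (M → ℝ) VF] where
  g : VF → VF → M → ℝ
  dd : VF → (M → ℝ) → M → ℝ
  nabla : VF → VF → VF
  bracket : VF → VF → VF
  S : VF → VF → M → ℝ
  r : M → ℝ
  T : VF → VF → M → ℝ
  frame : Fin 4 → VF
  xi : VF
  lam : ℝ
  kappa : ℝ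
  sigma : M → ℝ
  rho : M → ℝ
  g_symm : ∀ X Y, g X Y = g Y X
  g_add_left : ∀ X Y Z, g (X + Y) Z = g X Z + g Y Z
  g_smul_left : ∀ (f : M → ℝ) (X Y : VF), g (f • X) Y = f * g X Y
  g_nondeg : ∀ X Y : VF, (∀ Z : VF, g X Z = g Y Z) → X = Y
  S_symm : ∀ X Y, S X Y = S Y X
  compat : ∀ X Y Z, dd X (g Y Z) = g (nabla X Y) Z + g Y (nabla X Z)
  torsion_free : ∀ X Y, nabla X Y - nabla Y X = bracket X Y
  frame_ortho : ∀ i j, ∀ m : M,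
    g (frame i) (frame j) m = if i = j then lorentzSign i else 0
  ricci_trace : ∀ X Y, ∀ m : M, S X Y m = ∑ i, lorentzSign i *
    g (nabla (frame i) (nabla X Y) - nabla X (nabla (frame i) Y)
      - nabla (bracket (frame i) X) Y) (frame i) m
  scalar_trace : ∀ m : M, r m = ∑ i, lorentzSign i * S (frame i) (frame i) m
  unit_timelike : ∀ m : M, g xi xi m = -1
  T_def : ∀ X Y, ∀ m : M, T X Y m = rho m * g X Y m
    + (sigma m + rho m) * g X xi m * g Y xi m
  einstein : ∀ X Y, ∀ m : M,
    S X Y m + (lam - r m / 2) * g X Y m = kappa * T X Y m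

namespace PerfectFluidSpacetime

variable {M VF : Type*} [AddCommGroup VF] [Module (M → ℝ) VF]

/-- The 1-form `η` metrically equivalent to the velocity field `ξ`:
`η(X) = g(X, ξ)`. -/
def eta (P : PerfectFluidSpacetime M VF) (X : VF) : M → ℝ := P.g X P.xi

/-- The Lie derivative of the metric along a vector field `V`:
`(£_V g)(X,Y) = V(g(X,Y)) - g([V,X],Y) - g(X,[V,Y])`. -/
def lieg (P : PerfectFluidSpacetime M VF) (V X Y : VF) : M → ℝ :=
  fun m => P.dd V (P.g X Y) m - P.g (P.bracket V X) Y m - P.g X (P.bracket V Y) m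

/-- The velocity vector field `ξ` is torse-forming: `∇_X ξ = X + η(X)ξ`. -/
def TorseForming (P : PerfectFluidSpacetime M VF) : Prop :=
  ∀ X : VF, P.nabla X P.xi = X + P.eta X • P.xi

/-- The Riemann curvature tensor
`R(X,Y)Z = ∇_X ∇_Y Z - ∇_Y ∇_X Z - ∇_[X,Y] Z`. -/
def curv (P : PerfectFluidSpacetime M VF) (X Y Z : VF) : VF :=
  P.nabla X (P.nabla Y Z) - P.nabla Y (P.nabla X Z) - P.nabla (P.bracket X Y) Z

/-- The divergence of a vector field, computed in a pseudo-orthonormal frame. -/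
def divVF (P : PerfectFluidSpacetime M VF) (X : VF) : M → ℝ :=
  fun m => ∑ i, lorentzSign i * P.g (P.nabla (P.frame i) X) (P.frame i) m

/-- The covariant derivative `(∇_X F)(Y) = ∇_X (F Y) - F (∇_X Y)` of a
(1,1)-tensor field `F`. -/
def nablaT (P : PerfectFluidSpacetime M VF) (F : VF → VF) (X Y : VF) : VF :=
  P.nabla X (F Y) - F (P.nabla X Y)

/-- The divergence of a (1,1)-tensor field `F`, obtained by contracting `∇F`
over a pseudo-orthonormal frame. -/
def divT (P : PerfectFluidSpacetime M VF) (F : VF → VF) (Y : VF) : M → ℝ :=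
  fun m => ∑ i, lorentzSign i * P.g (P.nablaT F (P.frame i) Y) (P.frame i) m

/-- The conformal Ricci–Yamabe soliton equation (with `n = 4`, so `2/n = 1/2`):
`£_V g + 2αS + [2Λ - βr - (p + 1/2)] g = 0`. -/
def IsConformalRYSoliton (P : PerfectFluidSpacetime M VF) (V : VF)
    (Λ : ℝ) (α β p : M → ℝ) : Prop :=
  ∀ X Y : VF, ∀ m : M, P.lieg V X Y m + 2 * α m * P.S X Y m
    + (2 * Λ - β m * P.r m - (p m + 1 / 2)) * P.g X Y m = 0

/-- The Ricci–Yamabe soliton equation: `£_V g + 2αS = [2Λ - βr] g`. -/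
def IsRYSoliton (P : PerfectFluidSpacetime M VF) (V : VF)
    (Λ : ℝ) (α β : M → ℝ) : Prop :=
  ∀ X Y : VF, ∀ m : M, P.lieg V X Y m + 2 * α m * P.S X Y m
    = (2 * Λ - β m * P.r m) * P.g X Y m

/-- The conformal η-Ricci–Yamabe soliton equation (with `n = 4`), with
potential vector field the velocity field `ξ`:
`£_ξ g + 2αS + [2Λ - βr - (p + 1/2)] g + 2μ η ⊗ η = 0`. -/
def IsConformalEtaRYSoliton (P : PerfectFluidSpacetime M VF)
    (Λ μ : ℝ) (α β p : M → ℝ) : Prop :=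
  ∀ X Y : VF, ∀ m : M, P.lieg P.xi X Y m + 2 * α m * P.S X Y m
    + (2 * Λ - β m * P.r m - (p m + 1 / 2)) * P.g X Y m
    + 2 * μ * P.eta X m * P.eta Y m = 0

/-- `V` is a conformal Killing vector field with conformal scalar `Φ`:
`(£_V g)(X,Y) = 2Φ g(X,Y)`. -/
def IsConformalKilling (P : PerfectFluidSpacetime M VF) (V : VF)
    (Φ : M → ℝ) : Prop :=
  ∀ X Y : VF, ∀ m : M, P.lieg V X Y m = 2 * Φ m * P.g X Y m

end PerfectFluidSpacetime

namespace PerfectFluidSpacetime.IsConformalRYSoliton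

variable {M VF : Type*} [AddCommGroup VF] [Module (M → ℝ) VF]
  {P : PerfectFluidSpacetime M VF} {V : VF} {Λ : ℝ} {α β p : M → ℝ}

theorem lieg_eq (hsol : P.IsConformalRYSoliton V Λ α β p) (X Y : VF) (m : M) :
    P.lieg V X Y m = -(2 * α m * P.S X Y m)
      - (2 * Λ - β m * P.r m - (p m + 1 / 2)) * P.g X Y m := by
  linarith [hsol X Y m]

theorem ricci_eq_of_isConformalKilling (hsol : P.IsConformalRYSoliton V Λ α β p)
    (hα : ∀ m : M, α m ≠ 0) {Φ : M → ℝ} (hΦ : P.IsConformalKilling V Φ)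
    (X Y : VF) (m : M) :
    P.S X Y m = -(2 * Φ m + (2 * Λ - β m * P.r m - (p m + 1 / 2))) / (2 * α m)
      * P.g X Y m := by
  have h := hsol.lieg_eq X Y m
  rw [hΦ X Y m] at h
  field_simp [hα m]
  linarith

theorem isConformalKilling_of_ricci_eq (hsol : P.IsConformalRYSoliton V Λ α β p)
    {θ : M → ℝ} (hθ : ∀ X Y : VF, ∀ m : M, P.S X Y m = θ m * P.g X Y m) :
    P.IsConformalKilling V
      fun m => -(2 * α m * θ m + (2 * Λ - β m * P.r m - (p m + 1 / 2))) / 2 := by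
  intro X Y m
  rw [hsol.lieg_eq X Y m, hθ X Y m]
  ring

end PerfectFluidSpacetime.IsConformalRYSoliton

theorem conformal_killing_iff_einstein_general
    {M VF : Type*} [AddCommGroup VF] [Module (M → ℝ) VF]
    (P : PerfectFluidSpacetime M VF)
    (V : VF) (Λ : ℝ) (α β p : M → ℝ)
    (hsol : P.IsConformalRYSoliton V Λ α β p)
    (hα : ∀ m : M, α m ≠ 0) :
    (∃ Φ : M → ℝ, P.IsConformalKilling V Φ) ↔
      (∃ θ : M → ℝ, ∀ X Y : VF, ∀ m : M, P.S X Y m = θ m * P.g X Y m) :=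
  ⟨fun ⟨_, hΦ⟩ => ⟨_, hsol.ricci_eq_of_isConformalKilling hα hΦ⟩,
    fun ⟨_, hθ⟩ => ⟨_, hsol.isConformalKilling_of_ricci_eq hθ⟩⟩

/-- Let a perfect fluid spacetime `(M⁴, g)` with torse-forming
velocity vector field `ξ` admit a conformal Ricci–Yamabe soliton
`(g, V, Λ, α, β)` with `α ≠ 0`.  Then the potential vector field `V` is a
conformal Killing vector field if and only if the spacetime is Einstein, i.e.
`S(X,Y) = θ g(X,Y)` for some scalar `θ`. -/
theorem conformal_killing_iff_einstein
    {M VF : Type*} [AddCommGroup VF] [Module (M → ℝ) VF]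
    (P : PerfectFluidSpacetime M VF)
    (V : VF) (Λ : ℝ) (α β p : M → ℝ)
    (hTF : P.TorseForming)
    (hsol : P.IsConformalRYSoliton V Λ α β p)
    (hα : ∀ m : M, α m ≠ 0) :
    (∃ Φ : M → ℝ, P.IsConformalKilling V Φ) ↔
      (∃ θ : M → ℝ, ∀ X Y : VF, ∀ m : M, P.S X Y m = θ m * P.g X Y m) :=
  conformal_killing_iff_einstein_general P V Λ α β p hsol hα
end

section
/- Let a perfect fluid spacetime (M⁴,g) with torse-forming velocity vector field ξ admit a conformal Ricci-Yamabe soliton (g, V, Λ, α, β). If the spacetime is Einstein, i.e. S(X,Y) = θ g(X,Y) for a scalar θ, then the potential vector field V satisfies (£_V g)(X,Y) = 2Ψ g(X,Y) with Ψ = −[Λ + αθ − βr/2 − (1/2)(p + 1/2)], i.e. V is a conformal Killing vector field with conformal scalar Ψ. -/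
/-- Let a perfect fluid spacetime `(M⁴, g)` with torse-forming
velocity vector field `ξ` admit a conformal Ricci–Yamabe soliton
`(g, V, Λ, α, β)`.  If the spacetime is Einstein, i.e. `S(X,Y) = θ g(X,Y)` for
a scalar `θ`, then `(£_V g)(X,Y) = 2Ψ g(X,Y)` with
`Ψ = -[Λ + αθ - βr/2 - (1/2)(p + 1/2)]`, i.e. `V` is a conformal Killing
vector field with conformal scalar `Ψ`. -/
theorem einstein_implies_conformal_killing
    {M VF : Type*} [AddCommGroup VF] [Module (M → ℝ) VF]
    (P : PerfectFluidSpacetime M VF)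
    (V : VF) (Λ : ℝ) (α β p θ : M → ℝ)
    (hTF : P.TorseForming)
    (hsol : P.IsConformalRYSoliton V Λ α β p)
    (hEin : ∀ X Y : VF, ∀ m : M, P.S X Y m = θ m * P.g X Y m) :
    let Ψ : M → ℝ := fun m =>
      -(Λ + α m * θ m - β m * P.r m / 2 - 1 / 2 * (p m + 1 / 2))
    P.IsConformalKilling V Ψ := by
  intro Ψ X Y m
  have h := hsol X Y m
  rw [hEin X Y m] at h
  simp only [Ψ]
  ring_nf
  ring_nf at h
  linarith
end
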